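/- arXiv:2604.26196 — 2 statements merged into one kernel-verified Lean document; each statement's English description precedes it below -/
import Mathlib

section
/- Let V be a finite-dimensional real vector space, 𝕋V = V × V* with pairing ⟨(u,ξ),(v,η)⟩ = ξ(v) + η(u), and L ⊆ 𝕋V a Lagrangian subspace. For any subspace I ⊆ V*, one has L[{0} × I] = L ⋆ (I° × I), where L[J] := (L ∩ J^⊥) + J, I° := {v ∈ V : ξ(v) = 0 for all ξ ∈ I}, and ⋆ is the tangent product. -/
open Module

variable {V W : Type*} [AddCommGroup V] [Module ℝ V] [AddCommGroup W] [Module ℝ W]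

/-- The canonical symmetric pairing on the generalized tangent space `𝕋V = V × V*`:
`⟨(u,ξ),(v,η)⟩ = ξ(v) + η(u)`. -/
noncomputable def gpair : (V × Module.Dual ℝ V) →ₗ[ℝ] (V × Module.Dual ℝ V) →ₗ[ℝ] ℝ :=
  LinearMap.mk₂ ℝ (fun a b => a.2 b.1 + b.2 a.1)
    (fun a a' b => by
      simp only [Prod.fst_add, Prod.snd_add, LinearMap.add_apply, map_add]; ring)
    (fun r a b => by
      simp only [Prod.smul_fst, Prod.smul_snd, LinearMap.smul_apply, map_smul,
        smul_eq_mul]; ring)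
    (fun a b b' => by
      simp only [Prod.fst_add, Prod.snd_add, LinearMap.add_apply, map_add]; ring)
    (fun r a b => by
      simp only [Prod.smul_fst, Prod.smul_snd, LinearMap.smul_apply, map_smul,
        smul_eq_mul]; ring)

/-- Orthogonal complement with respect to the canonical pairing on `𝕋V`. -/
noncomputable def gperp (S : Submodule ℝ (V × Module.Dual ℝ V)) :
    Submodule ℝ (V × Module.Dual ℝ V) where
  carrier := {a | ∀ b ∈ S, gpair a b = 0}
  add_mem' := by
    intro a b ha hb c hc
    rw [map_add, LinearMap.add_apply, ha c hc, hb c hc, add_zero]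
  zero_mem' := by
    intro c hc
    rw [map_zero, LinearMap.zero_apply]
  smul_mem' := by
    intro r a ha c hc
    rw [map_smul, LinearMap.smul_apply, ha c hc, smul_zero]

/-- A subspace of `𝕋V` is Lagrangian if it equals its own orthogonal complement. -/
def IsLagrangian (L : Submodule ℝ (V × Module.Dual ℝ V)) : Prop :=
  gperp L = L

/-- A linear map `π : V* → V` is skew-symmetric. -/
def IsSkew (π : Module.Dual ℝ V →ₗ[ℝ] V) : Prop :=
  ∀ ξ η : Module.Dual ℝ V, η (π ξ) = -(ξ (π η))

/-- The tangent product `L ⋆ R = {(u, ξ+η) : (u,ξ) ∈ L, (u,η) ∈ R}`. -/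
def tanProd (L R : Submodule ℝ (V × Module.Dual ℝ V)) :
    Submodule ℝ (V × Module.Dual ℝ V) where
  carrier := {a | ∃ ξ η : Module.Dual ℝ V, (a.1, ξ) ∈ L ∧ (a.1, η) ∈ R ∧ a.2 = ξ + η}
  add_mem' := by
    rintro a b ⟨ξ, η, h1, h2, h3⟩ ⟨ξ', η', h1', h2', h3'⟩
    refine ⟨ξ + ξ', η + η', ?_, ?_, ?_⟩
    · simpa [Prod.fst_add] using L.add_mem h1 h1'
    · simpa [Prod.fst_add] using R.add_mem h2 h2'
    · simp only [Prod.snd_add, h3, h3']; abel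
  zero_mem' := ⟨0, 0, by simpa [Prod.mk_zero_zero] using L.zero_mem, by simpa [Prod.mk_zero_zero] using R.zero_mem, by simp⟩
  smul_mem' := by
    rintro r a ⟨ξ, η, h1, h2, h3⟩
    refine ⟨r • ξ, r • η, ?_, ?_, ?_⟩
    · simpa [Prod.smul_fst] using L.smul_mem r h1
    · simpa [Prod.smul_fst] using R.smul_mem r h2
    · simp only [Prod.smul_snd, h3, smul_add]

/-- The cotangent product `L ⊛ R = {(u+v, ξ) : (u,ξ) ∈ L, (v,ξ) ∈ R}`. -/
def cotProd (L R : Submodule ℝ (V × Module.Dual ℝ V)) :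
    Submodule ℝ (V × Module.Dual ℝ V) where
  carrier := {a | ∃ u v : V, (u, a.2) ∈ L ∧ (v, a.2) ∈ R ∧ a.1 = u + v}
  add_mem' := by
    rintro a b ⟨u, v, h1, h2, h3⟩ ⟨u', v', h1', h2', h3'⟩
    refine ⟨u + u', v + v', ?_, ?_, ?_⟩
    · simpa [Prod.snd_add] using L.add_mem h1 h1'
    · simpa [Prod.snd_add] using R.add_mem h2 h2'
    · simp only [Prod.fst_add, h3, h3']; abel
  zero_mem' := ⟨0, 0, by simpa [Prod.mk_zero_zero] using L.zero_mem, by simpa [Prod.mk_zero_zero] using R.zero_mem, by simp⟩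
  smul_mem' := by
    rintro r a ⟨u, v, h1, h2, h3⟩
    refine ⟨r • u, r • v, ?_, ?_, ?_⟩
    · simpa [Prod.smul_snd] using L.smul_mem r h1
    · simpa [Prod.smul_snd] using R.smul_mem r h2
    · simp only [Prod.smul_fst, h3, smul_add]

/-- The backward image `φ^!(L) = {(u, η ∘ φ) : (φ(u), η) ∈ L}`. -/
def back (φ : V →ₗ[ℝ] W) (L : Submodule ℝ (W × Module.Dual ℝ W)) :
    Submodule ℝ (V × Module.Dual ℝ V) where
  carrier := {a | ∃ η : Module.Dual ℝ W, (φ a.1, η) ∈ L ∧ a.2 = η.comp φ}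
  add_mem' := by
    rintro a b ⟨η, h1, h2⟩ ⟨η', h1', h2'⟩
    refine ⟨η + η', ?_, ?_⟩
    · simpa [Prod.fst_add, map_add] using L.add_mem h1 h1'
    · simp only [Prod.snd_add, h2, h2', LinearMap.add_comp]
  zero_mem' := ⟨0, by simpa [Prod.mk_zero_zero] using L.zero_mem, by simp⟩
  smul_mem' := by
    rintro r a ⟨η, h1, h2⟩
    refine ⟨r • η, ?_, ?_⟩
    · simpa [Prod.smul_fst, map_smul] using L.smul_mem r h1
    · simp only [Prod.smul_snd, h2, LinearMap.smul_comp]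

/-- The forward image `φ_!(L) = {(φ(u), η) : (u, η ∘ φ) ∈ L}`. -/
def fwd (φ : V →ₗ[ℝ] W) (L : Submodule ℝ (V × Module.Dual ℝ V)) :
    Submodule ℝ (W × Module.Dual ℝ W) where
  carrier := {b | ∃ u : V, φ u = b.1 ∧ (u, b.2.comp φ) ∈ L}
  add_mem' := by
    rintro a b ⟨u, h1, h2⟩ ⟨u', h1', h2'⟩
    refine ⟨u + u', ?_, ?_⟩
    · simp only [map_add, h1, h1', Prod.fst_add]
    · have := L.add_mem h2 h2'
      simpa [Prod.snd_add, LinearMap.add_comp] using this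
  zero_mem' := ⟨0, by simp, by simpa [Prod.mk_zero_zero] using L.zero_mem⟩
  smul_mem' := by
    rintro r a ⟨u, h1, h2⟩
    refine ⟨r • u, ?_, ?_⟩
    · simp only [map_smul, h1, Prod.smul_fst]
    · have := L.smul_mem r h2
      simpa [Prod.smul_snd, LinearMap.smul_comp] using this

/-- The graph `Gr(π) = {(π(ξ), ξ) : ξ ∈ V*}` of a map `π : V* → V`. -/
def gr (π : Module.Dual ℝ V →ₗ[ℝ] V) : Submodule ℝ (V × Module.Dual ℝ V) where
  carrier := {a | π a.2 = a.1}
  add_mem' := by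
    intro a b ha hb
    simp only [Set.mem_setOf_eq, Prod.fst_add, Prod.snd_add, map_add] at *
    rw [ha, hb]
  zero_mem' := by simp
  smul_mem' := by
    intro r a ha
    simp only [Set.mem_setOf_eq, Prod.smul_fst, Prod.smul_snd, map_smul] at *
    rw [ha]
theorem gperp_bot_prod (I : Submodule ℝ (Dual ℝ V)) :
    gperp ((⊥ : Submodule ℝ V).prod I) = I.dualCoannihilator.prod ⊤ := by
  ext ⟨u, ξ⟩
  have pair_zero_left (η : Dual ℝ V) : gpair (u, ξ) (0, η) = η u := by simp [gpair]
  simp only [Submodule.mem_prod, Submodule.mem_top, and_true,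
    Submodule.mem_dualCoannihilator]
  constructor
  · intro h η hη
    rw [← pair_zero_left]
    exact h (0, η) (Submodule.mem_prod.mpr ⟨Submodule.zero_mem _, hη⟩)
  · rintro h ⟨v, η⟩ hb
    obtain ⟨hv, hη⟩ := Submodule.mem_prod.mp hb
    rw [Submodule.mem_bot] at hv
    subst hv
    rw [pair_zero_left, h η hη]

theorem tanProd_prod (L : Submodule ℝ (V × Dual ℝ V)) (K : Submodule ℝ V)
    (I : Submodule ℝ (Dual ℝ V)) :
    tanProd L (K.prod I) = (L ⊓ K.prod ⊤) ⊔ (⊥ : Submodule ℝ V).prod I := by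
  ext ⟨u, ζ⟩
  rw [Submodule.mem_sup]
  constructor
  · rintro ⟨ξ, η, hξ, hη, rfl⟩
    obtain ⟨hu, hηI⟩ := Submodule.mem_prod.mp hη
    exact ⟨(u, ξ), ⟨hξ, Submodule.mem_prod.mpr ⟨hu, trivial⟩⟩, (0, η),
      Submodule.mem_prod.mpr ⟨Submodule.zero_mem _, hηI⟩, by simp⟩
  · rintro ⟨⟨v, ξ⟩, ⟨hξ, hv⟩, ⟨w, η⟩, hη, hsum⟩
    obtain ⟨hvK, -⟩ := Submodule.mem_prod.mp hv
    obtain ⟨hw, hηI⟩ := Submodule.mem_prod.mp hη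
    rw [Submodule.mem_bot] at hw
    subst hw
    rw [Prod.mk_add_mk, add_zero] at hsum
    rw [← hsum]
    exact ⟨ξ, η, hξ, Submodule.mem_prod.mpr ⟨hvK, hηI⟩, rfl⟩

theorem stmt8_general
    (L : Submodule ℝ (V × Module.Dual ℝ V))
    (I : Submodule ℝ (Module.Dual ℝ V)) :
    (L ⊓ gperp ((⊥ : Submodule ℝ V).prod I)) ⊔ (⊥ : Submodule ℝ V).prod I
      = tanProd L (I.dualCoannihilator.prod I) := by
  rw [gperp_bot_prod, tanProd_prod]

theorem stmt8 [FiniteDimensional ℝ V]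
    (L : Submodule ℝ (V × Module.Dual ℝ V)) (hL : IsLagrangian L)
    (I : Submodule ℝ (Module.Dual ℝ V)) :
    (L ⊓ gperp ((⊥ : Submodule ℝ V).prod I)) ⊔ (⊥ : Submodule ℝ V).prod I
      = tanProd L (I.dualCoannihilator.prod I) :=
  stmt8_general L I
end

section
/- Let V be a finite-dimensional real vector space, Π : V* → V a skew-symmetric linear map, and K ⊆ V a subspace. Set H := {ξ ∈ ann(K) : Π(ξ) ∈ K}, where ann(K) := {ξ ∈ V* : ξ vanishes on K}. Then {v ∈ V : ξ(v) = 0 for all ξ ∈ H} = K + Π(ann(K)). -/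
open Module

variable {V W : Type*} [AddCommGroup V] [Module ℝ V] [AddCommGroup W] [Module ℝ W]

theorem IsSkew.dualAnnihilator_map {p : Module.Dual ℝ V →ₗ[ℝ] V} (hp : IsSkew p)
    (U : Submodule ℝ (Module.Dual ℝ V)) :
    (U.map p).dualAnnihilator = U.dualCoannihilator.comap p := by
  ext ξ
  simp only [Submodule.mem_dualAnnihilator, Submodule.mem_comap,
    Submodule.mem_dualCoannihilator, Submodule.mem_map, forall_exists_index, and_imp,
    forall_apply_eq_imp_iff₂, hp _ ξ, neg_eq_zero]

theorem stmt16 [FiniteDimensional ℝ V]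
    (p : Module.Dual ℝ V →ₗ[ℝ] V) (hp : IsSkew p)
    (K : Submodule ℝ V) :
    (K.dualAnnihilator ⊓ K.comap p).dualCoannihilator
      = K ⊔ K.dualAnnihilator.map p := by
  calc (K.dualAnnihilator ⊓ K.comap p).dualCoannihilator
      = (K.dualAnnihilator ⊓ (K.dualAnnihilator.map p).dualAnnihilator).dualCoannihilator := by
        rw [hp.dualAnnihilator_map, Subspace.dualAnnihilator_dualCoannihilator_eq]
    _ = (K ⊔ K.dualAnnihilator.map p).dualAnnihilator.dualCoannihilator := by
        rw [Submodule.dualAnnihilator_sup_eq]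
    _ = K ⊔ K.dualAnnihilator.map p := Subspace.dualAnnihilator_dualCoannihilator_eq
end
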